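/- arXiv:2404.12131 — 4 statements merged into one kernel-verified Lean document; each statement's English description precedes it below -/
import Mathlib

section
/- If a sequence (a_n) of real numbers is a Stieltjes moment sequence, i.e. there exists a positive measure μ on [0,∞) with a_n = ∫ x^n dμ(x) for all n ≥ 0, then there exist real numbers c ≥ 0 and α_1, α_2, ... ≥ 0 such that the formal power series ∑ a_n t^n equals the Stieltjes continued fraction c/(1 - α_1 t/(1 - α_2 t/(1 - ...))) in the sense of formal power series (i.e., for each N, the first N coefficients of the continued fraction truncated to depth N agree with a_0, ..., a_{N-1}). -/
open MeasureTheory PowerSeries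

/-- Depth-`d` truncation of the Stieltjes continued fraction
`1/(1 - α_i t/(1 - α_{i+1} t/(1 - ...)))`, starting at index `i`. -/
noncomputable def sfrac (α : ℕ → ℝ) : ℕ → ℕ → PowerSeries ℝ
  | 0, _ => 1
  | d + 1, i => (1 - PowerSeries.C (α i) * PowerSeries.X * sfrac α d (i + 1))⁻¹

/-!
Write `w k = α (k + 1)` and `S = ∑ Sₙ tⁿ` for the S-fraction `1/(1 - w 0 t/(1 - w 1 t/(1 - ⋯)))`.
It is the generating function of Dyck paths in which a down-step from height `h + 1` to `h` has
weight `w h`. Cutting the paths of length `2 (p + r + ε)` at time `2 p + ε` factors the Hankel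
matrix `(S_{p+r+ε})_{p,r}` as `L D Lᵀ`, with `L` unitriangular and `D` made of the products
`w 0 ⋯ w (h - 1)`. Inverting `L` gives monic polynomials `q` of degree `s` with
`∫ x^ε q(x)² dμ = a₀ · w 0 ⋯ w (2 s + ε - 1)`, as soon as `a` agrees with `a₀ S` up to degree
`2 s + ε`.

The weights are chosen one at a time so that `a (n + 1) = a₀ S_{n+1}`; this is possible because
`S_{n+1}` is affine in `w n` with slope `w 0 ⋯ w (n - 1)`, and the integrals above force
`w n ≥ 0`. When the slope vanishes, `x^ε q(x)` vanishes `μ`-almost everywhere, so `a` and `a₀ S`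
satisfy the same linear recurrence and agree at `n + 1` anyway.
-/

open Finset

namespace sfrac

variable (α : ℕ → ℝ)

lemma one_sub_mul_sfrac_succ (d i : ℕ) :
    (1 - C (α i) * X * sfrac α d (i + 1)) * sfrac α (d + 1) i = 1 :=
  PowerSeries.mul_inv_cancel _ (by simp)

lemma X_pow_dvd_succ_sub (d i : ℕ) : X ^ d ∣ sfrac α (d + 1) i - sfrac α d i := by
  induction d generalizing i with
  | zero => simp
  | succ d ih =>
    obtain ⟨g, hg⟩ := ih (i + 1)
    refine ⟨sfrac α (d + 2) i * sfrac α (d + 1) i * C (α i) * g, ?_⟩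
    linear_combination sfrac α (d + 1) i * one_sub_mul_sfrac_succ α (d + 1) i
      - sfrac α (d + 2) i * one_sub_mul_sfrac_succ α d i
      + sfrac α (d + 2) i * sfrac α (d + 1) i * C (α i) * X * hg

lemma X_pow_dvd_sub {d e : ℕ} (hde : d ≤ e) (i : ℕ) : X ^ d ∣ sfrac α e i - sfrac α d i := by
  induction e, hde using Nat.le_induction with
  | base => simp
  | succ e hde ih =>
    rw [← sub_add_sub_cancel _ (sfrac α e i)]
    exact ((pow_dvd_pow X hde).trans (X_pow_dvd_succ_sub α e i)).add ih

end sfrac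

/-- The full S-fraction: the coefficient of `tⁿ` in `sfrac α d i` is the same for all `d > n`. -/
noncomputable def stieltjesSeries (α : ℕ → ℝ) (i : ℕ) : PowerSeries ℝ :=
  PowerSeries.mk fun n => coeff n (sfrac α (n + 1) i)

namespace stieltjesSeries

variable (α : ℕ → ℝ)

lemma X_pow_dvd_sub_sfrac (d i : ℕ) : X ^ d ∣ stieltjesSeries α i - sfrac α d i := by
  refine X_pow_dvd_iff.2 fun m hm => ?_
  obtain ⟨g, hg⟩ := sfrac.X_pow_dvd_sub α (Nat.succ_le_of_lt hm) i
  have := congrArg (coeff m) hg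
  rw [coeff_X_pow_mul', if_neg (by omega), map_sub] at this
  simp [stieltjesSeries, sub_eq_zero.1 this]

lemma coeff_sfrac_eq {n d : ℕ} (h : n < d) (i : ℕ) :
    coeff n (sfrac α d i) = coeff n (stieltjesSeries α i) := by
  obtain ⟨g, hg⟩ := X_pow_dvd_sub_sfrac α d i
  have := congrArg (coeff n) hg
  rw [coeff_X_pow_mul', if_neg (by omega), map_sub] at this
  linarith

lemma constantCoeff_eq_one (i : ℕ) : constantCoeff (stieltjesSeries α i) = 1 := by
  rw [← coeff_zero_eq_constantCoeff_apply, ← coeff_sfrac_eq α zero_lt_one]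
  simp [sfrac]

lemma eq_one_add (i : ℕ) :
    stieltjesSeries α i
      = 1 + C (α i) * X * stieltjesSeries α (i + 1) * stieltjesSeries α i := by
  ext n
  rw [← sub_eq_zero, ← map_sub]
  refine X_pow_dvd_iff.1 ?_ n (by omega : n < n + 1)
  obtain ⟨g₁, h₁⟩ := X_pow_dvd_sub_sfrac α (n + 1) i
  obtain ⟨g₂, h₂⟩ := X_pow_dvd_sub_sfrac α n (i + 1)
  refine ⟨g₁ - C (α i) * X * sfrac α n (i + 1) * g₁ - C (α i) * g₂ * sfrac α (n + 1) i
    - C (α i) * X ^ (n + 1) * g₁ * g₂, ?_⟩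
  linear_combination (1 - C (α i) * X * (sfrac α n (i + 1) + X ^ n * g₂)) * h₁
    - C (α i) * X * stieltjesSeries α i * h₂ + sfrac.one_sub_mul_sfrac_succ α n i

end stieltjesSeries

namespace Dyck

variable (w : ℕ → ℝ)

/-- Transfer operator of weighted Dyck paths on the heights `ℕ`: `paths w m h` below is the total
weight of the paths of length `m` from `0` to `h`, a down-step from `h + 1` to `h` weighing
`w h`. -/
def step : Module.End ℝ (ℕ → ℝ) where
  toFun v
    | 0 => w 0 * v 1
    | h + 1 => v h + w (h + 1) * v (h + 2)
  map_add' u v := by funext h; cases h <;> simp <;> ring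
  map_smul' c v := by funext h; cases h <;> simp <;> ring

def paths (m : ℕ) : ℕ → ℝ := (step w ^ m) (Pi.single 0 1)

def weightProd (h : ℕ) : ℝ := ∏ k ∈ range h, w k

def moment (n : ℕ) : ℝ := paths w (2 * n) 0

@[simp] lemma step_apply_zero (v : ℕ → ℝ) : step w v 0 = w 0 * v 1 := rfl

@[simp] lemma step_apply_succ (v : ℕ → ℝ) (h : ℕ) :
    step w v (h + 1) = v h + w (h + 1) * v (h + 2) := rfl

lemma paths_zero : paths w 0 = Pi.single 0 1 := rfl

lemma paths_succ (m : ℕ) : paths w (m + 1) = step w (paths w m) := by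
  rw [paths, pow_succ', Module.End.mul_apply, paths]

@[simp] lemma weightProd_zero : weightProd w 0 = 1 := rfl

lemma weightProd_succ (h : ℕ) : weightProd w (h + 1) = weightProd w h * w h :=
  prod_range_succ w h

lemma weightProd_congr {w' : ℕ → ℝ} {h : ℕ} (hw : ∀ k < h, w k = w' k) :
    weightProd w h = weightProd w' h :=
  prod_congr rfl fun k hk => hw k (mem_range.1 hk)

lemma paths_eq_zero_of_lt {m h : ℕ} (hmh : m < h) : paths w m h = 0 := by
  induction m generalizing h with
  | zero => simp [paths_zero, hmh.ne']
  | succ m ih =>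
    obtain ⟨h, rfl⟩ := Nat.exists_eq_add_one_of_ne_zero (by omega : h ≠ 0)
    rw [paths_succ, step_apply_succ, ih (by omega), ih (by omega), mul_zero, add_zero]

@[simp] lemma paths_self (m : ℕ) : paths w m m = 1 := by
  induction m with
  | zero => simp [paths_zero]
  | succ m ih =>
    rw [paths_succ, step_apply_succ, ih, paths_eq_zero_of_lt w (by omega), mul_zero, add_zero]

lemma paths_eq_zero_of_odd {m h : ℕ} (hodd : Odd (m + h)) : paths w m h = 0 := by
  induction m generalizing h with
  | zero => simp [paths_zero, show h ≠ 0 by rintro rfl; simp at hodd]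
  | succ m ih =>
    cases h with
    | zero =>
      rw [paths_succ, step_apply_zero, ih (by simpa [Nat.odd_add_one, add_comm] using hodd),
        mul_zero]
    | succ h => rw [paths_succ, step_apply_succ, ih (by grind), ih (by grind), mul_zero, add_zero]

lemma paths_congr {w' : ℕ → ℝ} {m : ℕ} (hw : ∀ k, k + 1 < m → w k = w' k) :
    paths w m = paths w' m := by
  induction m with
  | zero => rfl
  | succ m ih =>
    funext h
    rw [paths_succ, paths_succ, ih fun k hk => hw k (by omega)]
    cases h with
    | zero =>
      rcases Nat.lt_or_ge 0 m with hm | hm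
      · rw [step_apply_zero, step_apply_zero, hw 0 (by omega)]
      · simp [paths_eq_zero_of_lt w' (show m < 1 by omega)]
    | succ h =>
      rcases Nat.lt_or_ge (h + 1) m with hm | hm
      · rw [step_apply_succ, step_apply_succ, hw (h + 1) (by omega)]
      · simp [paths_eq_zero_of_lt w' (show m < h + 2 by omega)]

/-- Self-adjointness of `step w` for the weights `weightProd w`. -/
lemma sum_step_mul_eq {K : ℕ} {u v : ℕ → ℝ} (hu : u K = 0) (hv : v K = 0) :
    ∑ h ∈ range K, step w u h * v h * weightProd w h
      = ∑ h ∈ range K, u h * step w v h * weightProd w h := by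
  cases K with
  | zero => simp
  | succ K =>
    have key (u v : ℕ → ℝ) : ∑ h ∈ range (K + 1), step w u h * v h * weightProd w h
        = ∑ h ∈ range K, w h * u h * v (h + 1) * weightProd w h
          + ∑ h ∈ range (K + 1), w h * u (h + 1) * v h * weightProd w h := by
      rw [sum_range_succ', sum_range_succ' (fun h => w h * u (h + 1) * v h * weightProd w h),
        ← add_assoc, ← sum_add_distrib]
      congr 1
      refine sum_congr rfl fun h _ => ?_
      simp only [step_apply_succ, weightProd_succ]
      ring
    simp_rw [mul_comm (u _) (step w v _)]
    rw [key u v, key v u]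
    simp only [sum_range_succ _ K, hu, hv, mul_zero, zero_mul, add_zero]
    rw [add_comm]
    congr 1 <;> exact sum_congr rfl fun h _ => by ring

/-- The factorization `L D Lᵀ` of the Hankel matrices of the moments of `w`. -/
lemma paths_add_apply_zero {m n K : ℕ} (hK : m + n < K) :
    paths w (m + n) 0 = ∑ h ∈ range K, paths w m h * paths w n h * weightProd w h := by
  induction m generalizing n with
  | zero =>
    rw [sum_eq_single_of_mem 0 (mem_range.2 (by omega)) fun h _ h0 => by simp [paths_zero, h0]]
    simp
  | succ m ih =>
    rw [show m + 1 + n = m + (n + 1) by omega, ih (by omega), paths_succ, paths_succ,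
      sum_step_mul_eq w (paths_eq_zero_of_lt w (by omega)) (paths_eq_zero_of_lt w (by omega))]

lemma moment_eq_sum (n : ℕ) :
    moment w n = ∑ h ∈ range (n + 1), paths w n h ^ 2 * weightProd w h := by
  rw [moment, two_mul, paths_add_apply_zero w (K := n + n + 1) (by omega)]
  refine (sum_subset (range_subset_range.2 (by omega)) fun h _ hh => ?_).symm.trans
    (sum_congr rfl fun h _ => by ring)
  rw [paths_eq_zero_of_lt w (by simpa using hh)]
  ring

lemma moment_succ_eq {w' : ℕ → ℝ} {n : ℕ} (hw : ∀ k < n, w k = w' k) :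
    moment w (n + 1) = moment w' (n + 1) + weightProd w n * (w n - w' n) := by
  have hlow : ∑ h ∈ range (n + 1), paths w' (n + 1) h ^ 2 * weightProd w h
      = ∑ h ∈ range (n + 1), paths w' (n + 1) h ^ 2 * weightProd w' h :=
    sum_congr rfl fun h hh => by rw [weightProd_congr w fun k hk => hw k (by simp at hh; omega)]
  rw [moment_eq_sum, moment_eq_sum, sum_range_succ _ (n + 1), sum_range_succ _ (n + 1),
    paths_self, paths_self, weightProd_succ, weightProd_succ, weightProd_congr w hw,
    paths_congr w fun k hk => hw k (by omega), hlow]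
  ring

noncomputable def polyVec (ε : ℕ) : Polynomial ℝ →ₗ[ℝ] ℕ → ℝ :=
  LinearMap.applyₗ (paths w ε) ∘ₗ (Polynomial.aeval (step w ^ 2)).toLinearMap

lemma polyVec_X_pow (ε p : ℕ) : polyVec w ε (Polynomial.X ^ p) = paths w (2 * p + ε) := by
  simp [polyVec, paths, ← pow_mul, ← Module.End.mul_apply, ← pow_add]

lemma polyVec_apply (ε : ℕ) (q : Polynomial ℝ) (h : ℕ) :
    polyVec w ε q h = ∑ p ∈ range (q.natDegree + 1), q.coeff p * paths w (2 * p + ε) h := by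
  simp [polyVec, Polynomial.aeval_eq_sum_range, paths, ← pow_mul, ← Module.End.mul_apply,
    ← pow_add]

lemma paths_eq_single_add_sum {ε : ℕ} (hε : ε ≤ 1) (s : ℕ) :
    paths w (2 * s + ε) = Pi.single (2 * s + ε) 1
      + ∑ q ∈ range s, paths w (2 * s + ε) (2 * q + ε) • Pi.single (2 * q + ε) 1 := by
  funext h
  simp only [Pi.add_apply, Finset.sum_apply, Pi.smul_apply, Pi.single_apply, smul_eq_mul,
    mul_ite, mul_one, mul_zero]
  by_cases hh : h % 2 = ε ∧ h / 2 < s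
  · rw [sum_eq_single_of_mem (h / 2) (mem_range.2 hh.2) fun q _ hq => if_neg (by omega),
      if_neg (by omega), if_pos (by omega), zero_add, show 2 * (h / 2) + ε = h by omega]
  · rw [sum_eq_zero fun q hq => if_neg (by simp at hq; omega), add_zero]
    split_ifs with hn
    · rw [hn, paths_self]
    rcases Nat.lt_or_ge (2 * s + ε) h with hlt | hge
    · exact paths_eq_zero_of_lt w hlt
    · exact paths_eq_zero_of_odd w (Nat.odd_iff.2 (by omega))

lemma single_sub_polyVec_mem {ε : ℕ} (hε : ε ≤ 1) (s : ℕ) :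
    Pi.single (2 * s + ε) 1 - polyVec w ε (Polynomial.X ^ s)
      ∈ (Polynomial.degreeLT ℝ s).map (polyVec w ε) := by
  induction s using Nat.strong_induction_on with
  | _ s ih =>
    have hlow : ∀ q < s, Pi.single (2 * q + ε) 1 ∈ (Polynomial.degreeLT ℝ s).map (polyVec w ε) := by
      intro q hq
      rw [← sub_add_cancel (Pi.single (2 * q + ε) (1 : ℝ)) (polyVec w ε (Polynomial.X ^ q))]
      refine add_mem (Submodule.map_mono (Polynomial.degreeLT_mono hq.le) (ih q hq))
        (Submodule.mem_map_of_mem (Polynomial.mem_degreeLT.2 ?_))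
      simpa using hq
    rw [polyVec_X_pow, paths_eq_single_add_sum w hε, sub_add_cancel_left]
    exact neg_mem (sum_mem fun q hq => Submodule.smul_mem _ _ (hlow q (mem_range.1 hq)))

/-- The coefficients `u` of the monic orthogonal polynomial `q` of degree `s` for the moments
`moment w (· + ε)`: inverting the unitriangular path vectors `paths w (2 p + ε)` gives
`q(T²) Tᵋ e₀ = e_{2 s + ε}`, where `T = step w`. -/
lemma exists_orthogonal {ε : ℕ} (hε : ε ≤ 1) (s : ℕ) :
    ∃ u : ℕ → ℝ, u s = 1 ∧ ∀ h,
      ∑ p ∈ range (s + 1), u p * paths w (2 * p + ε) h = if h = 2 * s + ε then 1 else 0 := by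
  obtain ⟨r, hr, hvec⟩ := Submodule.mem_map.1 (single_sub_polyVec_mem w hε s)
  have hdeg : r.degree < s := Polynomial.mem_degreeLT.1 hr
  set q := Polynomial.X ^ s + r with hq
  have hmonic : q.Monic := Polynomial.monic_X_pow_add hdeg
  have hnat : q.natDegree = s := by
    rw [hq, Polynomial.natDegree_add_eq_left_of_degree_lt (by simpa using hdeg),
      Polynomial.natDegree_X_pow]
  refine ⟨q.coeff, hnat ▸ hmonic.coeff_natDegree, fun h => ?_⟩
  rw [← hnat, ← polyVec_apply, hq, map_add, hvec, add_sub_cancel, Pi.single_apply, hnat]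

lemma sum_mul_moment_eq {ε s : ℕ} {u : ℕ → ℝ}
    (hu : ∀ h, ∑ p ∈ range (s + 1), u p * paths w (2 * p + ε) h
      = if h = 2 * s + ε then 1 else 0) (t : ℕ) :
    ∑ r ∈ range (s + 1), u r * moment w (t + ε + r)
      = paths w (2 * t + ε) (2 * s + ε) * weightProd w (2 * s + ε) := by
  set K := 2 * (t + s + ε) + 1
  have hsplit : ∀ r ∈ range (s + 1), u r * moment w (t + ε + r)
      = ∑ h ∈ range K, u r * paths w (2 * r + ε) h * (paths w (2 * t + ε) h * weightProd w h) := by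
    intro r hr
    rw [moment, show 2 * (t + ε + r) = 2 * t + ε + (2 * r + ε) by ring,
      paths_add_apply_zero w (K := K) (by simp at hr; omega), mul_sum]
    exact sum_congr rfl fun h _ => by ring
  rw [sum_congr rfl hsplit, sum_comm]
  simp_rw [← sum_mul, hu, ite_mul, one_mul, zero_mul]
  rw [sum_ite_eq' (range K), if_pos (mem_range.2 (by omega))]

end Dyck

namespace stieltjesSeries

variable (α : ℕ → ℝ)

/-- `tʰ ∏_{j ≤ h} S_{i+j}(t²)`: a path from `0` to `h` is made of `h` up-steps and, before,
between and after them, excursions above the heights `0, …, h`, counted by `S_{i+j}(t²)`. -/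
noncomputable def heightSeries (i h : ℕ) : PowerSeries ℝ :=
  X ^ h * ∏ j ∈ range (h + 1), expand 2 two_ne_zero (stieltjesSeries α (i + j))

lemma expand_eq_one_add (i : ℕ) :
    expand 2 two_ne_zero (stieltjesSeries α i)
      = 1 + C (α i) * X ^ 2 * expand 2 two_ne_zero (stieltjesSeries α (i + 1))
          * expand 2 two_ne_zero (stieltjesSeries α i) := by
  conv_lhs => rw [eq_one_add]
  simp [expand_C]

lemma heightSeries_zero (i : ℕ) : heightSeries α i 0 = 1 + C (α i) * X * heightSeries α i 1 := by
  simp only [heightSeries, pow_zero, one_mul, pow_one, prod_range_succ, prod_range_zero, add_zero]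
  conv_lhs => rw [expand_eq_one_add α i]
  ring

lemma heightSeries_succ (i h : ℕ) :
    heightSeries α i (h + 1)
      = X * heightSeries α i h + C (α (i + (h + 1))) * X * heightSeries α i (h + 2) := by
  simp only [heightSeries, prod_range_succ _ (h + 1), prod_range_succ _ (h + 2)]
  conv_lhs => rw [expand_eq_one_add α (i + (h + 1))]
  rw [show i + (h + 1) + 1 = i + (h + 2) by ring]
  ring

lemma coeff_heightSeries (i m h : ℕ) :
    coeff m (heightSeries α i h) = Dyck.paths (fun k => α (i + k)) m h := by
  induction m generalizing h with
  | zero =>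
    cases h with
    | zero => simp [heightSeries, constantCoeff_eq_one]
    | succ h => simp [heightSeries, coeff_X_pow_mul', Dyck.paths_zero]
  | succ m ih =>
    cases h with
    | zero => simp [heightSeries_zero, mul_assoc, coeff_succ_X_mul, ih, Dyck.paths_succ]
    | succ h =>
      rw [heightSeries_succ]
      simp [mul_assoc, coeff_succ_X_mul, ih, Dyck.paths_succ]

lemma coeff_eq_moment (i n : ℕ) :
    coeff n (stieltjesSeries α i) = Dyck.moment (fun k => α (i + k)) n := by
  rw [Dyck.moment, ← coeff_heightSeries, ← coeff_expand_mul 2 two_ne_zero]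
  simp [heightSeries]

end stieltjesSeries

section Moments

variable {μ : Measure ℝ} {a : ℕ → ℝ}

lemma integrable_pow_mul_sum (hint : ∀ n : ℕ, Integrable (fun x => x ^ n) μ) (k N : ℕ)
    (u : ℕ → ℝ) : Integrable (fun x => x ^ k * ∑ r ∈ range N, u r * x ^ r) μ := by
  simp_rw [mul_sum, mul_left_comm _ (u _), ← pow_add]
  exact integrable_finsetSum _ fun r _ => (hint (k + r)).const_mul (u r)

lemma integral_pow_mul_sum (hint : ∀ n : ℕ, Integrable (fun x => x ^ n) μ)
    (ha : ∀ n : ℕ, a n = ∫ x, x ^ n ∂μ) (k N : ℕ) (u : ℕ → ℝ) :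
    ∫ x, x ^ k * ∑ r ∈ range N, u r * x ^ r ∂μ = ∑ r ∈ range N, u r * a (k + r) := by
  simp_rw [mul_sum, mul_left_comm _ (u _), ← pow_add]
  rw [integral_finsetSum _ fun r _ => (hint (k + r)).const_mul (u r)]
  simp_rw [integral_const_mul, ha]

lemma pow_mul_sq_sum (x : ℝ) (ε N : ℕ) (u : ℕ → ℝ) :
    x ^ ε * (∑ r ∈ range N, u r * x ^ r) ^ 2
      = ∑ p ∈ range N, u p * (x ^ (p + ε) * ∑ r ∈ range N, u r * x ^ r) := by
  rw [sq, ← mul_assoc, mul_sum]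
  exact sum_congr rfl fun p _ => by ring

lemma integrable_pow_mul_sq (hint : ∀ n : ℕ, Integrable (fun x => x ^ n) μ) (ε N : ℕ)
    (u : ℕ → ℝ) : Integrable (fun x => x ^ ε * (∑ r ∈ range N, u r * x ^ r) ^ 2) μ := by
  simp_rw [pow_mul_sq_sum]
  exact integrable_finsetSum _ fun p _ => (integrable_pow_mul_sum hint _ N u).const_mul (u p)

lemma integral_pow_mul_sq (hint : ∀ n : ℕ, Integrable (fun x => x ^ n) μ)
    (ha : ∀ n : ℕ, a n = ∫ x, x ^ n ∂μ) (ε N : ℕ) (u : ℕ → ℝ) :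
    ∫ x, x ^ ε * (∑ r ∈ range N, u r * x ^ r) ^ 2 ∂μ
      = ∑ p ∈ range N, u p * ∑ r ∈ range N, u r * a (p + ε + r) := by
  simp_rw [pow_mul_sq_sum]
  rw [integral_finsetSum _ fun p _ => (integrable_pow_mul_sum hint _ N u).const_mul (u p)]
  simp_rw [integral_const_mul, integral_pow_mul_sum hint ha]

lemma ae_nonneg_pow_mul_sq (h0 : μ (Set.Iio 0) = 0) (ε N : ℕ) (u : ℕ → ℝ) :
    0 ≤ᵐ[μ] fun x => x ^ ε * (∑ r ∈ range N, u r * x ^ r) ^ 2 := by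
  have hpos : ∀ᵐ x ∂μ, 0 ≤ x := by
    rw [ae_iff]
    convert h0 using 2
    ext
    simp
  filter_upwards [hpos] with x hx
  exact mul_nonneg (pow_nonneg hx ε) (sq_nonneg _)

lemma sum_mul_eq_zero_of_integral_sq_eq_zero (hint : ∀ n : ℕ, Integrable (fun x => x ^ n) μ)
    (ha : ∀ n : ℕ, a n = ∫ x, x ^ n ∂μ) (h0 : μ (Set.Iio 0) = 0) {ε N : ℕ} {u : ℕ → ℝ}
    (hsq : ∫ x, x ^ ε * (∑ r ∈ range N, u r * x ^ r) ^ 2 ∂μ = 0) (t : ℕ) :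
    ∑ r ∈ range N, u r * a (t + ε + r) = 0 := by
  have hzero := (integral_eq_zero_iff_of_nonneg_ae (ae_nonneg_pow_mul_sq h0 ε N u)
    (integrable_pow_mul_sq hint ε N u)).1 hsq
  rw [← integral_pow_mul_sum hint ha]
  refine integral_eq_zero_of_ae ?_
  filter_upwards [hzero] with x hx
  have : (x ^ ε * ∑ r ∈ range N, u r * x ^ r) ^ 2 = 0 := by
    rw [Pi.zero_apply] at hx
    linear_combination x ^ ε * hx
  rw [Pi.zero_apply, pow_add, mul_assoc, pow_eq_zero_iff two_ne_zero |>.1 this, mul_zero]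

lemma integral_sq_eq_mul_weightProd (hint : ∀ n : ℕ, Integrable (fun x => x ^ n) μ)
    (ha : ∀ n : ℕ, a n = ∫ x, x ^ n ∂μ) {w u : ℕ → ℝ} {ε s : ℕ}
    (hu : ∀ h, ∑ p ∈ range (s + 1), u p * Dyck.paths w (2 * p + ε) h
      = if h = 2 * s + ε then 1 else 0)
    (hmatch : ∀ j ≤ 2 * s + ε, a j = a 0 * Dyck.moment w j) :
    ∫ x, x ^ ε * (∑ r ∈ range (s + 1), u r * x ^ r) ^ 2 ∂μ
      = a 0 * Dyck.weightProd w (2 * s + ε) := by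
  rw [integral_pow_mul_sq hint ha]
  have hrow : ∀ p ∈ range (s + 1), u p * ∑ r ∈ range (s + 1), u r * a (p + ε + r)
      = a 0 * Dyck.weightProd w (2 * s + ε) * (u p * Dyck.paths w (2 * p + ε) (2 * s + ε)) := by
    intro p hp
    have : ∑ r ∈ range (s + 1), u r * a (p + ε + r)
        = a 0 * ∑ r ∈ range (s + 1), u r * Dyck.moment w (p + ε + r) := by
      rw [mul_sum]
      refine sum_congr rfl fun r hr => ?_
      rw [hmatch _ (by simp at hp hr; omega)]
      ring
    rw [this, Dyck.sum_mul_moment_eq w hu]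
    ring
  rw [sum_congr rfl hrow, ← mul_sum, hu, if_pos rfl, mul_one]

lemma mul_weightProd_nonneg (hint : ∀ n : ℕ, Integrable (fun x => x ^ n) μ)
    (ha : ∀ n : ℕ, a n = ∫ x, x ^ n ∂μ) (h0 : μ (Set.Iio 0) = 0) {w : ℕ → ℝ} {n : ℕ}
    (hmatch : ∀ j ≤ n, a j = a 0 * Dyck.moment w j) :
    0 ≤ a 0 * Dyck.weightProd w n := by
  have hn := Nat.div_add_mod n 2
  obtain ⟨u, -, hu⟩ := Dyck.exists_orthogonal w (by omega : n % 2 ≤ 1) (n / 2)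
  rw [← hn, ← integral_sq_eq_mul_weightProd hint ha hu (by rwa [hn])]
  exact integral_nonneg_of_ae (ae_nonneg_pow_mul_sq h0 _ _ u)

/-- When `a 0 * weightProd w n = 0`, the orthogonal polynomial of degree `n / 2` yields a linear
recurrence satisfied both by `a` and by `a 0 * moment w`; it determines their `(n + 1)`-st terms. -/
lemma eq_mul_moment_succ (hint : ∀ n : ℕ, Integrable (fun x => x ^ n) μ)
    (ha : ∀ n : ℕ, a n = ∫ x, x ^ n ∂μ) (h0 : μ (Set.Iio 0) = 0) {w : ℕ → ℝ} {n : ℕ}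
    (hmatch : ∀ j ≤ n, a j = a 0 * Dyck.moment w j) (hzero : a 0 * Dyck.weightProd w n = 0) :
    a (n + 1) = a 0 * Dyck.moment w (n + 1) := by
  have hn := Nat.div_add_mod n 2
  set s := n / 2
  set ε := n % 2
  obtain ⟨u, hus, hu⟩ := Dyck.exists_orthogonal w (by omega : ε ≤ 1) s
  have hrec := sum_mul_eq_zero_of_integral_sq_eq_zero hint ha h0
    (by rw [integral_sq_eq_mul_weightProd hint ha hu (by rwa [hn]), hn, hzero]) (s + 1)
  have hmom := Dyck.sum_mul_moment_eq w hu (s + 1)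
  rw [sum_range_succ, hus, one_mul, show s + 1 + ε + s = n + 1 by omega] at hrec hmom
  have hlow : ∑ r ∈ range s, u r * a (s + 1 + ε + r)
      = a 0 * ∑ r ∈ range s, u r * Dyck.moment w (s + 1 + ε + r) := by
    rw [mul_sum]
    refine sum_congr rfl fun r hr => ?_
    rw [hmatch _ (by simp at hr; omega)]
    ring
  rw [hn] at hmom
  linear_combination hrec - a 0 * hmom - hlow - Dyck.paths w (2 * (s + 1) + ε) n * hzero

end Moments

/-- `w n` solves `a 0 * moment w (n + 1) = a (n + 1)`, which is affine in `w n` with slope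
`a 0 * weightProd w n` (`Dyck.moment_succ_eq`); when the slope vanishes, `x / 0 = 0` gives
`w n = 0`. -/
noncomputable def greedyWeight (a : ℕ → ℝ) (n : ℕ) : ℝ :=
  let v : ℕ → ℝ := fun k => if _ : k < n then greedyWeight a k else 0
  (a (n + 1) - a 0 * Dyck.moment v (n + 1)) / (a 0 * Dyck.weightProd v n)

lemma greedyWeight_eq_div (a : ℕ → ℝ) (n : ℕ) :
    greedyWeight a n
      = (a (n + 1) - a 0 * (Dyck.moment (greedyWeight a) (n + 1)
          - Dyck.weightProd (greedyWeight a) n * greedyWeight a n))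
        / (a 0 * Dyck.weightProd (greedyWeight a) n) := by
  set v : ℕ → ℝ := fun k => if _ : k < n then greedyWeight a k else 0
  have hv : ∀ k < n, greedyWeight a k = v k := fun k hk => by simp [v, hk]
  rw [Dyck.moment_succ_eq _ hv, Dyck.weightProd_congr _ hv]
  conv_lhs => rw [greedyWeight]
  simp [v]

lemma mul_moment_greedyWeight_succ {a : ℕ → ℝ} {n : ℕ}
    (h : a 0 * Dyck.weightProd (greedyWeight a) n ≠ 0) :
    a 0 * Dyck.moment (greedyWeight a) (n + 1) = a (n + 1) := by
  have := greedyWeight_eq_div a n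
  rw [eq_div_iff h] at this
  linear_combination this

section Greedy

variable {μ : Measure ℝ} {a : ℕ → ℝ} (hint : ∀ n : ℕ, Integrable (fun x => x ^ n) μ)
  (ha : ∀ n : ℕ, a n = ∫ x, x ^ n ∂μ) (h0 : μ (Set.Iio 0) = 0)
include hint ha h0

lemma greedyWeight_moment (n : ℕ) : a n = a 0 * Dyck.moment (greedyWeight a) n := by
  induction n using Nat.strong_induction_on with
  | _ n ih =>
    cases n with
    | zero => simp [Dyck.moment]
    | succ n =>
      have hmatch : ∀ j ≤ n, a j = a 0 * Dyck.moment (greedyWeight a) j :=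
        fun j hj => ih j (by omega)
      by_cases hz : a 0 * Dyck.weightProd (greedyWeight a) n = 0
      · exact eq_mul_moment_succ hint ha h0 hmatch hz
      · exact (mul_moment_greedyWeight_succ hz).symm

lemma greedyWeight_nonneg (n : ℕ) : 0 ≤ greedyWeight a n := by
  by_cases hz : a 0 * Dyck.weightProd (greedyWeight a) n = 0
  · rw [greedyWeight_eq_div, hz, div_zero]
  have hmatch := fun j (_ : j ≤ n + 1) => greedyWeight_moment hint ha h0 j
  have hn := mul_weightProd_nonneg hint ha h0 fun j (hj : j ≤ n) => hmatch j (by omega)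
  have hsucc := mul_weightProd_nonneg hint ha h0 hmatch
  rw [Dyck.weightProd_succ, ← mul_assoc] at hsucc
  exact nonneg_of_mul_nonneg_right hsucc (hn.lt_of_ne' hz)

end Greedy

theorem stmt0 (a : ℕ → ℝ)
    (hmom : ∃ μ : Measure ℝ, μ (Set.Iio 0) = 0 ∧
      (∀ n : ℕ, Integrable (fun x => x ^ n) μ) ∧
      (∀ n : ℕ, a n = ∫ x, x ^ n ∂μ)) :
    ∃ c : ℝ, 0 ≤ c ∧ ∃ α : ℕ → ℝ, (∀ i, 0 ≤ α i) ∧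
      ∀ N : ℕ, ∀ n < N,
        PowerSeries.coeff n (PowerSeries.C c * sfrac α N 1) = a n := by
  obtain ⟨μ, h0, hint, ha⟩ := hmom
  refine ⟨a 0, by rw [ha 0]; exact integral_nonneg fun x => by simp,
    fun i => greedyWeight a (i - 1), fun i => greedyWeight_nonneg hint ha h0 _,
    fun N n hn => ?_⟩
  rw [coeff_C_mul, stieltjesSeries.coeff_sfrac_eq _ hn, stieltjesSeries.coeff_eq_moment,
    greedyWeight_moment hint ha h0 n]
  simp
end

section
/- Monotonicity in the reparametrization: fix ξ ≥ 0 and nonnegative reals (g_i)_{i≥0} and (g'_i)_{i≥0} satisfying, for all k ≥ 1, ξ g_{2k-2} + g_{2k-1} = ξ g'_{2k-2} + g'_{2k-1} and g_{2k-1} g_{2k}/(1+g_{2k-2}) = g'_{2k-1} g'_{2k}/(1+g'_{2k-2}). If 0 ≤ g'_0 ≤ g_0 and in addition whenever g'_{2k+1} = 0 one has g'_{2k+2} = 0, then for all k ≥ 0: 0 ≤ g'_{2k} ≤ g_{2k} and g'_{2k+1} ≥ g_{2k+1} ≥ 0. -/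
/-! Induction on `k`. Given `g'_{2k} ≤ g_{2k}`, the equation for `α_{2k+1}` forces
`g_{2k+1} ≤ g'_{2k+1}`. Then in the equation for `α_{2k+2}` the primed side has the larger
odd factor and the smaller denominator, so its even factor `g'_{2k+2}` must be the smaller one
(when `g'_{2k+1} = 0`, the vanishing condition gives `g'_{2k+2} = 0` directly). -/

lemma le_of_mul_add_eq_mul_add {ξ a a' c c' : ℝ} (hξ : 0 ≤ ξ) (ha : a' ≤ a)
    (h : ξ * a + c = ξ * a' + c') : c ≤ c' := by
  nlinarith [mul_le_mul_of_nonneg_left ha hξ]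

lemma le_of_mul_div_one_add_eq {a a' c c' d d' : ℝ} (ha' : 0 ≤ a') (ha : a' ≤ a)
    (hc' : 0 ≤ c') (hc : c ≤ c') (hd : 0 ≤ d) (hvanish : c' = 0 → d' = 0)
    (h : c * d / (1 + a) = c' * d' / (1 + a')) : d' ≤ d := by
  rcases hc'.eq_or_lt with hc'0 | hc'pos
  · rw [hvanish hc'0.symm]
    exact hd
  have hpos : 0 < 1 + a' := by linarith
  have hcross : c' * d' * (1 + a) = c * d * (1 + a') := by
    rw [div_eq_div_iff (by linarith) hpos.ne'] at h
    linarith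
  have hle : c' * d' * (1 + a) ≤ c' * d * (1 + a) := by
    rw [hcross]
    gcongr
  have : 0 < c' * (1 + a) := mul_pos hc'pos (by linarith)
  nlinarith

theorem stmt8 (ξ : ℝ) (hξ : 0 ≤ ξ) (g g' : ℕ → ℝ)
    (hg : ∀ i, 0 ≤ g i) (hg' : ∀ i, 0 ≤ g' i)
    (hodd : ∀ k : ℕ, 1 ≤ k →
      ξ * g (2 * k - 2) + g (2 * k - 1) = ξ * g' (2 * k - 2) + g' (2 * k - 1))
    (heven : ∀ k : ℕ, 1 ≤ k →
      g (2 * k - 1) * g (2 * k) / (1 + g (2 * k - 2))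
        = g' (2 * k - 1) * g' (2 * k) / (1 + g' (2 * k - 2)))
    (h0 : g' 0 ≤ g 0)
    (hvanish : ∀ k : ℕ, g' (2 * k + 1) = 0 → g' (2 * k + 2) = 0) :
    ∀ k : ℕ, (g' (2 * k) ≤ g (2 * k)) ∧ (g (2 * k + 1) ≤ g' (2 * k + 1)) := by
  have hodd' : ∀ k : ℕ,
      ξ * g (2 * k) + g (2 * k + 1) = ξ * g' (2 * k) + g' (2 * k + 1) := fun k ↦ by
    simpa [show 2 * (k + 1) - 2 = 2 * k by omega, show 2 * (k + 1) - 1 = 2 * k + 1 by omega]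
      using hodd (k + 1) (by omega)
  have heven' : ∀ k : ℕ, g (2 * k + 1) * g (2 * k + 2) / (1 + g (2 * k))
      = g' (2 * k + 1) * g' (2 * k + 2) / (1 + g' (2 * k)) := fun k ↦ by
    simpa [show 2 * (k + 1) - 2 = 2 * k by omega, show 2 * (k + 1) - 1 = 2 * k + 1 by omega,
      show 2 * (k + 1) = 2 * k + 2 by omega] using heven (k + 1) (by omega)
  have hstep : ∀ k, g' (2 * k) ≤ g (2 * k) → g (2 * k + 1) ≤ g' (2 * k + 1) := fun k hk ↦
    le_of_mul_add_eq_mul_add hξ hk (hodd' k)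
  intro k
  induction k with
  | zero => exact ⟨h0, hstep 0 h0⟩
  | succ k ih =>
    have he : g' (2 * (k + 1)) ≤ g (2 * (k + 1)) :=
      le_of_mul_div_one_add_eq (hg' _) ih.1 (hg' _) ih.2 (hg _) (hvanish k) (heven' k)
    exact ⟨he, hstep (k + 1) he⟩
end

section
/- Main theorem, (c) ⟹ (b): Fix ξ ≥ 0. If there exist c ≥ 0 and g_0, g_1, g_2, ... ≥ 0 (with g_0 possibly positive) generating S-fraction coefficients α_{2k-1} = ξ(1+g_{2k-2}) + g_{2k-1}, α_{2k} = g_{2k-1} g_{2k}/(1+g_{2k-2}), then there exist g'_0 = 0 and g'_1, g'_2, ... ≥ 0 generating the same coefficients (α_i) via the same formulas. -/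
/-!
Odd coefficients only see `ξ * g₀' + g₁'`, so setting `g₀' = 0` is compensated by
`g₁' = g₁ + ξ g₀`. This changes `g₁'`, which the even coefficient `α₂ = g₁' g₂' / (1 + g₀')`
absorbs by solving for `g₂'`; that in turn shifts `g₃'`, and so on. Inductively
`0 ≤ g'_{2k} ≤ g_{2k}`, which keeps every new entry nonnegative.
-/

/-- `normalizedEven ξ g k` is the new entry `g'_{2k}`. -/
noncomputable def normalizedEven (ξ : ℝ) (g : ℕ → ℝ) : ℕ → ℝ
  | 0 => 0
  | k + 1 =>
      g (2 * k + 1) * g (2 * k + 2) * (1 + normalizedEven ξ g k) /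
        ((1 + g (2 * k)) * (g (2 * k + 1) + ξ * (g (2 * k) - normalizedEven ξ g k)))

noncomputable def normalizedSeq (ξ : ℝ) (g : ℕ → ℝ) (n : ℕ) : ℝ :=
  if n % 2 = 0 then normalizedEven ξ g (n / 2)
  else g n + ξ * (g (n - 1) - normalizedEven ξ g (n / 2))

section

variable {ξ : ℝ} {g : ℕ → ℝ}

@[simp]
lemma normalizedSeq_even (k : ℕ) : normalizedSeq ξ g (2 * k) = normalizedEven ξ g k := by
  simp [normalizedSeq]

@[simp]
lemma normalizedSeq_odd (k : ℕ) :
    normalizedSeq ξ g (2 * k + 1) =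
      g (2 * k + 1) + ξ * (g (2 * k) - normalizedEven ξ g k) := by
  simp [normalizedSeq, Nat.add_mod, Nat.add_div]

lemma normalizedSeq_zero : normalizedSeq ξ g 0 = 0 := by
  simpa [normalizedEven] using normalizedSeq_even (ξ := ξ) (g := g) 0

lemma normalizedEven_succ (k : ℕ) :
    normalizedEven ξ g (k + 1) =
      g (2 * k + 1) * g (2 * k + 2) * (1 + normalizedEven ξ g k) /
        ((1 + g (2 * k)) * normalizedSeq ξ g (2 * k + 1)) := by
  rw [normalizedSeq_odd, normalizedEven]

lemma div_mem_Icc_of_le {ξ a b c e : ℝ} (hξ : 0 ≤ ξ) (ha : 0 ≤ a) (hb : 0 ≤ b) (hc : 0 ≤ c)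
    (he : 0 ≤ e) (hea : e ≤ a) :
    b * c * (1 + e) / ((1 + a) * (b + ξ * (a - e))) ∈ Set.Icc 0 c := by
  have hshift : b ≤ b + ξ * (a - e) := le_add_of_nonneg_right (mul_nonneg hξ (sub_nonneg.2 hea))
  refine ⟨by positivity, div_le_of_le_mul₀ (by nlinarith) hc ?_⟩
  calc b * c * (1 + e) ≤ (b + ξ * (a - e)) * c * (1 + a) := by gcongr
    _ = c * ((1 + a) * (b + ξ * (a - e))) := by ring

lemma normalizedEven_mem_Icc (hξ : 0 ≤ ξ) (hg : ∀ i, 0 ≤ g i) (k : ℕ) :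
    normalizedEven ξ g k ∈ Set.Icc 0 (g (2 * k)) := by
  induction k with
  | zero => exact ⟨le_rfl, hg 0⟩
  | succ k ih =>
    rw [normalizedEven, show 2 * (k + 1) = 2 * k + 2 by ring]
    exact div_mem_Icc_of_le hξ (hg _) (hg _) (hg _) ih.1 ih.2

lemma normalizedSeq_nonneg (hξ : 0 ≤ ξ) (hg : ∀ i, 0 ≤ g i) (n : ℕ) :
    0 ≤ normalizedSeq ξ g n := by
  obtain ⟨k, rfl | rfl⟩ := Nat.even_or_odd' n
  · simpa using (normalizedEven_mem_Icc hξ hg k).1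
  · have hk := normalizedEven_mem_Icc hξ hg k
    rw [normalizedSeq_odd]
    have := mul_nonneg hξ (sub_nonneg.2 hk.2)
    linarith [hg (2 * k + 1)]

lemma normalizedSeq_odd_coeff (k : ℕ) :
    ξ * (1 + normalizedSeq ξ g (2 * k)) + normalizedSeq ξ g (2 * k + 1) =
      ξ * (1 + g (2 * k)) + g (2 * k + 1) := by
  simp only [normalizedSeq_even, normalizedSeq_odd]
  ring

lemma normalizedSeq_even_coeff (hξ : 0 ≤ ξ) (hg : ∀ i, 0 ≤ g i) (k : ℕ) :
    normalizedSeq ξ g (2 * k + 1) * normalizedSeq ξ g (2 * k + 2) /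
        (1 + normalizedSeq ξ g (2 * k)) =
      g (2 * k + 1) * g (2 * k + 2) / (1 + g (2 * k)) := by
  have hk := normalizedEven_mem_Icc hξ hg k
  have hgk : 0 < 1 + g (2 * k) := by linarith [hg (2 * k)]
  have hek : 0 < 1 + normalizedEven ξ g k := by linarith [hk.1]
  have hnext : normalizedSeq ξ g (2 * k + 2) = normalizedEven ξ g (k + 1) :=
    normalizedSeq_even (k + 1)
  rw [normalizedSeq_even, hnext, normalizedEven_succ]
  rcases (normalizedSeq_nonneg hξ hg (2 * k + 1)).eq_or_lt with ho | ho
  · have hodd : g (2 * k + 1) = 0 := by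
      have := mul_nonneg hξ (sub_nonneg.2 hk.2)
      rw [normalizedSeq_odd] at ho
      linarith [hg (2 * k + 1)]
    simp [hodd]
  · field_simp

end

theorem stmt9 (ξ : ℝ) (hξ : 0 ≤ ξ) (g α : ℕ → ℝ)
    (hg : ∀ i, 0 ≤ g i)
    (hα : ∀ k : ℕ, 1 ≤ k →
      α (2 * k - 1) = ξ * (1 + g (2 * k - 2)) + g (2 * k - 1) ∧
      α (2 * k) = g (2 * k - 1) * g (2 * k) / (1 + g (2 * k - 2))) :
    ∃ g' : ℕ → ℝ, g' 0 = 0 ∧ (∀ i, 0 ≤ g' i) ∧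
      ∀ k : ℕ, 1 ≤ k →
        α (2 * k - 1) = ξ * (1 + g' (2 * k - 2)) + g' (2 * k - 1) ∧
        α (2 * k) = g' (2 * k - 1) * g' (2 * k) / (1 + g' (2 * k - 2)) := by
  refine ⟨normalizedSeq ξ g, normalizedSeq_zero, normalizedSeq_nonneg hξ hg, fun k hk => ?_⟩
  obtain ⟨j, rfl⟩ : ∃ j, k = j + 1 := ⟨k - 1, by omega⟩
  have hodd : 2 * (j + 1) - 1 = 2 * j + 1 := by omega
  have hprev : 2 * (j + 1) - 2 = 2 * j := by omega
  have heven : 2 * (j + 1) = 2 * j + 2 := by ring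
  obtain ⟨hα₁, hα₂⟩ := hα (j + 1) hk
  rw [hodd, hprev] at hα₁
  rw [hodd, hprev, heven] at hα₂ ⊢
  exact ⟨hα₁.trans (normalizedSeq_odd_coeff j).symm,
    hα₂.trans (normalizedSeq_even_coeff hξ hg j).symm⟩
end

section
/- For every ξ > 0 there do not exist nonnegative reals g_0, g_1, g_2, ... satisfying, for all k ≥ 1, both 1 = ξ(1 + g_{2k-2}) + g_{2k-1} and 1 = g_{2k-1} g_{2k}/(1 + g_{2k-2}). -/
/-! Writing `a k = g (2k)` and `b k = g (2k+1)`, the equations read `ξ (1 + a k) + b k = 1` and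
`b k * a (k+1) = 1 + a k`. The first forces `b k ≤ 1`, so the second gives `a (k+1) ≥ 1 + a k`,
and `a k ≥ k` grows without bound; but the first also bounds `a k` by `1/ξ - 1`. -/

lemma one_add_le_of_mul_eq_one_add {a a' b : ℝ} (ha' : 0 ≤ a') (hb : b ≤ 1)
    (h : b * a' = 1 + a) : 1 + a ≤ a' := by
  nlinarith

lemma natCast_le_of_one_add_le_succ {a : ℕ → ℝ} (h₀ : 0 ≤ a 0) (h : ∀ k, 1 + a k ≤ a (k + 1))
    (k : ℕ) : (k : ℝ) ≤ a k := by
  induction k with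
  | zero => simpa using h₀
  | succ n ih => push_cast; linarith [h n]

lemma false_of_catalan_parametrization {ξ : ℝ} (hξ : 0 < ξ) {a b : ℕ → ℝ}
    (ha : ∀ k, 0 ≤ a k) (hb : ∀ k, 0 ≤ b k) (hodd : ∀ k, ξ * (1 + a k) + b k = 1)
    (heven : ∀ k, b k * a (k + 1) = 1 + a k) : False := by
  have hb_le_one : ∀ k, b k ≤ 1 := fun k => by
    nlinarith [hodd k, mul_pos hξ (by linarith [ha k] : (0 : ℝ) < 1 + a k)]
  have hgrow : ∀ k : ℕ, (k : ℝ) ≤ a k := natCast_le_of_one_add_le_succ (ha 0) fun k =>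
    one_add_le_of_mul_eq_one_add (ha (k + 1)) (hb_le_one k) (heven k)
  obtain ⟨k, hk⟩ := exists_nat_gt ξ⁻¹
  have hξk : 1 < ξ * k := by rwa [← inv_mul_lt_iff₀ hξ, mul_one]
  nlinarith [hodd k, hb k, mul_le_mul_of_nonneg_left (hgrow k) hξ.le]

theorem stmt12 (ξ : ℝ) (hξ : 0 < ξ) :
    ¬ ∃ g : ℕ → ℝ, (∀ i, 0 ≤ g i) ∧
      ∀ k : ℕ, 1 ≤ k →
        (1 : ℝ) = ξ * (1 + g (2 * k - 2)) + g (2 * k - 1) ∧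
        (1 : ℝ) = g (2 * k - 1) * g (2 * k) / (1 + g (2 * k - 2)) := by
  rintro ⟨g, hg, hk⟩
  have hk' : ∀ k : ℕ, 1 = ξ * (1 + g (2 * k)) + g (2 * k + 1) ∧
      1 = g (2 * k + 1) * g (2 * (k + 1)) / (1 + g (2 * k)) := fun k => by
    have h2 : 2 * (k + 1) - 2 = 2 * k := by omega
    have h1 : 2 * (k + 1) - 1 = 2 * k + 1 := by omega
    simpa only [h2, h1] using hk (k + 1) (by omega)
  refine false_of_catalan_parametrization hξ (a := fun k => g (2 * k))
    (b := fun k => g (2 * k + 1)) (fun k => hg _) (fun k => hg _) (fun k => (hk' k).1.symm)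
    fun k => ?_
  have hne : 1 + g (2 * k) ≠ 0 := by linarith [hg (2 * k)]
  simpa using ((eq_div_iff hne).1 (hk' k).2).symm
end
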